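/- arXiv:1311.2247 — 9 statements merged into one kernel-verified Lean document; each statement's English description precedes it below -/
import Mathlib

section
/- Let a, b, c be pairwise distinct real numbers and let α, β, γ all be nonzero. Then R_{α,β,γ} = { (x, βx/(2(a−b)x+α), γx/(2(a−c)x+α)) : x ∈ ℝ, 2(a−b)x+α ≠ 0 and 2(a−c)x+α ≠ 0 }. In particular the set of relative equilibria of a generic deformation is the disjoint union of three smooth curve pieces (corresponding to the three intervals of x between the two excluded values), one of which passes through the origin. -/
/-!
A `2 × 3` matrix has rank at most one iff the cross product of its rows vanishes. For the rows
`(2ax + α, 2by + β, 2cz + γ)` and `(x, y, z)`, two components of that cross product say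
`(2(a-b)x + α) y = β x` and `(2(a-c)x + α) z = γ x`; the denominators cannot vanish, since then
`x = 0` and hence `α = 0`. Conversely, on the curve both rows are multiples of
`(1, β / (2(a-b)x + α), γ / (2(a-c)x + α))`.
-/

open Matrix

namespace Matrix

theorem rank_eq_card_height_iff {K m n : Type*} [Field K] [Fintype m] [Fintype n]
    (A : Matrix m n K) : A.rank = Fintype.card m ↔ LinearIndependent K A.row := by
  rw [rank_eq_finrank_span_row, linearIndependent_iff_card_eq_finrank_span, Set.finrank, eq_comm,
    row_def]

theorem rank_le_one_iff_cross_eq_zero {K : Type*} [Field K] (A : Matrix (Fin 2) (Fin 3) K) :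
    A.rank ≤ 1 ↔ A 0 ⨯₃ A 1 = 0 := by
  have hrow : A.row = ![A 0, A 1] := by
    ext i : 1
    fin_cases i <;> rfl
  have hrank_two : A.rank = 2 ↔ LinearIndependent K ![A 0, A 1] := by
    simpa [hrow] using A.rank_eq_card_height_iff
  have := A.rank_le_height
  rw [← not_iff_not, ← ne_eq, crossProduct_ne_zero_iff_linearIndependent, ← hrank_two]
  omega

end Matrix

theorem ne_zero_and_eq_div_of_mul_eq_mul {a b α β x y : ℝ} (hα : α ≠ 0) (hβ : β ≠ 0)
    (h : (2*a*x + α) * y = (2*b*y + β) * x) :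
    2*(a-b)*x + α ≠ 0 ∧ y = β*x / (2*(a-b)*x + α) := by
  have hy : (2*(a-b)*x + α) * y = β * x := by linear_combination h
  have hD : 2*(a-b)*x + α ≠ 0 := by
    intro hD
    have hx : x = 0 := by simpa [hD, hβ] using hy
    simp only [hx, mul_zero, zero_add] at hD
    exact hα hD
  exact ⟨hD, by rw [← hy, mul_div_cancel_left₀ _ hD]⟩

theorem two_mul_mul_div_add_eq {a b α β x : ℝ} (hD : 2*(a-b)*x + α ≠ 0) :
    2*b*(β*x / (2*(a-b)*x + α)) + β = (2*a*x + α) * (β / (2*(a-b)*x + α)) := by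
  rw [mul_div_assoc', div_add' _ _ _ hD, mul_div_assoc']
  ring

theorem cross_eq_zero_of_mem_curve {a b c α β γ x : ℝ} (hDy : 2*(a-b)*x + α ≠ 0)
    (hDz : 2*(a-c)*x + α ≠ 0) :
    ![2*a*x + α, 2*b*(β*x / (2*(a-b)*x + α)) + β, 2*c*(γ*x / (2*(a-c)*x + α)) + γ] ⨯₃
      ![x, β*x / (2*(a-b)*x + α), γ*x / (2*(a-c)*x + α)] = 0 := by
  set v : Fin 3 → ℝ := ![1, β / (2*(a-b)*x + α), γ / (2*(a-c)*x + α)]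
  have h0 : ![2*a*x + α, 2*b*(β*x / (2*(a-b)*x + α)) + β, 2*c*(γ*x / (2*(a-c)*x + α)) + γ] =
      (2*a*x + α) • v := by
    rw [two_mul_mul_div_add_eq hDy, two_mul_mul_div_add_eq hDz, smul_vec3]
    simp
  have h1 : ![x, β*x / (2*(a-b)*x + α), γ*x / (2*(a-c)*x + α)] = x • v := by
    rw [smul_vec3, smul_eq_mul, smul_eq_mul, smul_eq_mul, mul_one, mul_div_assoc', mul_div_assoc',
      mul_comm x β, mul_comm x γ]
  simp only [h0, h1, map_smul, LinearMap.smul_apply, cross_self, smul_zero]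

theorem stmt_3_general (a b c α β γ : ℝ)
    (hα : α ≠ 0) (hβ : β ≠ 0) (hγ : γ ≠ 0) :
    {p : ℝ × ℝ × ℝ |
        (!![2*a*p.1 + α, 2*b*p.2.1 + β, 2*c*p.2.2 + γ; p.1, p.2.1, p.2.2] :
          Matrix (Fin 2) (Fin 3) ℝ).rank ≤ 1} =
      {q : ℝ × ℝ × ℝ | ∃ x : ℝ, 2*(a-b)*x + α ≠ 0 ∧ 2*(a-c)*x + α ≠ 0 ∧
        q = (x, β*x / (2*(a-b)*x + α), γ*x / (2*(a-c)*x + α))} := by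
  ext ⟨x, y, z⟩
  rw [Set.mem_ofPred_eq, Set.mem_ofPred_eq, rank_le_one_iff_cross_eq_zero]
  change ![2*a*x + α, 2*b*y + β, 2*c*z + γ] ⨯₃ ![x, y, z] = 0 ↔ _
  constructor
  · intro h
    have hxy : (2*a*x + α) * y = (2*b*y + β) * x := by
      have h2 := congrFun h 2
      simp only [cross_apply, cons_val, Pi.zero_apply] at h2
      linear_combination h2
    have hxz : (2*a*x + α) * z = (2*c*z + γ) * x := by
      have h1 := congrFun h 1
      simp only [cross_apply, cons_val, Pi.zero_apply] at h1
      linear_combination -h1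
    obtain ⟨hDy, rfl⟩ := ne_zero_and_eq_div_of_mul_eq_mul hα hβ hxy
    obtain ⟨hDz, rfl⟩ := ne_zero_and_eq_div_of_mul_eq_mul hα hγ hxz
    exact ⟨x, hDy, hDz, rfl⟩
  · rintro ⟨x, hDy, hDz, ⟨⟩⟩
    exact cross_eq_zero_of_mem_curve hDy hDz

/-- For pairwise distinct `a b c` and `α β γ` all nonzero, the set of
relative equilibria `R_{α,β,γ}` is the graph-curve
`x ↦ (x, βx/(2(a−b)x+α), γx/(2(a−c)x+α))` over the set of `x` where both
denominators are nonzero. -/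
theorem stmt_3 (a b c α β γ : ℝ) (hab : a ≠ b) (hbc : b ≠ c) (hac : a ≠ c)
    (hα : α ≠ 0) (hβ : β ≠ 0) (hγ : γ ≠ 0) :
    {p : ℝ × ℝ × ℝ |
        (!![2*a*p.1 + α, 2*b*p.2.1 + β, 2*c*p.2.2 + γ; p.1, p.2.1, p.2.2] :
          Matrix (Fin 2) (Fin 3) ℝ).rank ≤ 1} =
      {q : ℝ × ℝ × ℝ | ∃ x : ℝ, 2*(a-b)*x + α ≠ 0 ∧ 2*(a-c)*x + α ≠ 0 ∧
        q = (x, β*x / (2*(a-b)*x + α), γ*x / (2*(a-c)*x + α))} :=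
  stmt_3_general a b c α β γ hα hβ hγ
end

section
/- Let a, b, c be pairwise distinct real numbers and let α ≠ 0. Then R_{α,0,0} = {(x,0,0) : x ∈ ℝ} ∪ {(−α/(2(a−b)), y, 0) : y ∈ ℝ} ∪ {(−α/(2(a−c)), 0, z) : z ∈ ℝ}, i.e. the set of relative equilibria consists of the x-axis together with two lines crossing it, one parallel to the y-axis and one parallel to the z-axis. -/
/-!
A `2 × 3` matrix has rank at most one exactly when its rows are linearly dependent, i.e. when
their cross product vanishes. For the rows `(2ax + α, 2by, 2cz)` and `(x, y, z)` the cross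
product is `(2(b-c)yz, -z(2(a-c)x + α), y(2(a-b)x + α))`. Since `b ≠ c`, one of `y, z` is zero;
if the other is nonzero, the corresponding linear factor pins down `x`.
-/

open Matrix

theorem Matrix.rank_lt_card_height_iff {m n R : Type*} [Fintype m] [Fintype n] [Field R]
    (M : Matrix m n R) : M.rank < Fintype.card m ↔ ¬ LinearIndependent R M.row := by
  rw [linearIndependent_iff_card_eq_finrank_span, Set.finrank, ← M.rank_eq_finrank_span_row]
  exact ⟨Nat.ne_of_gt, M.rank_le_card_height.lt_of_ne'⟩

theorem Matrix.rank_of_le_one_iff_crossProduct_eq_zero {K : Type*} [Field K]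
    (u v : Fin 3 → K) : (of ![u, v]).rank ≤ 1 ↔ u ⨯₃ v = 0 := by
  have h := (of ![u, v]).rank_lt_card_height_iff
  rw [Fintype.card_fin, Nat.lt_succ_iff] at h
  rw [h, ← not_ne_iff, crossProduct_ne_zero_iff_linearIndependent]
  rfl

theorem mul_add_eq_zero_iff_eq_neg_div {K : Type*} [Field K] {d x α : K} (hd : d ≠ 0) :
    d * x + α = 0 ↔ x = -α / d := by
  rw [add_eq_zero_iff_eq_neg, eq_div_iff hd, mul_comm]

theorem crossProduct_gradient {R : Type*} [CommRing R] (a b c α x y z : R) :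
    ![2*a*x + α, 2*b*y, 2*c*z] ⨯₃ ![x, y, z] =
      ![2*(b-c)*(y*z), -(z*(2*(a-c)*x + α)), y*(2*(a-b)*x + α)] := by
  ext i
  fin_cases i <;> simp [cross_apply] <;> ring

theorem crossProduct_gradient_eq_zero_iff {K : Type*} [Field K] [NeZero (2 : K)]
    {a b c α x y z : K} (hab : a ≠ b) (hbc : b ≠ c) (hac : a ≠ c) :
    ![2*a*x + α, 2*b*y, 2*c*z] ⨯₃ ![x, y, z] = 0 ↔
      (y = 0 ∧ z = 0 ∨ x = -α / (2*(a-b)) ∧ z = 0) ∨ x = -α / (2*(a-c)) ∧ y = 0 := by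
  have two_sub_ne_zero {s t : K} (h : s ≠ t) : 2*(s-t) ≠ 0 :=
    mul_ne_zero two_ne_zero (sub_ne_zero.mpr h)
  simp only [crossProduct_gradient, cons_eq_zero_iff, zero_empty, and_true, mul_eq_zero,
    neg_eq_zero, two_sub_ne_zero hbc, false_or,
    mul_add_eq_zero_iff_eq_neg_div (two_sub_ne_zero hab),
    mul_add_eq_zero_iff_eq_neg_div (two_sub_ne_zero hac)]
  tauto

theorem stmt_4_general (a b c α : ℝ) (hab : a ≠ b) (hbc : b ≠ c) (hac : a ≠ c) :
    {p : ℝ × ℝ × ℝ |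
        (!![2*a*p.1 + α, 2*b*p.2.1, 2*c*p.2.2; p.1, p.2.1, p.2.2] :
          Matrix (Fin 2) (Fin 3) ℝ).rank ≤ 1} =
      {q : ℝ × ℝ × ℝ | ∃ x : ℝ, q = (x, 0, 0)} ∪
      {q : ℝ × ℝ × ℝ | ∃ y : ℝ, q = (-α / (2*(a-b)), y, 0)} ∪
      {q : ℝ × ℝ × ℝ | ∃ z : ℝ, q = (-α / (2*(a-c)), 0, z)} := by
  ext ⟨x, y, z⟩
  rw [Set.mem_ofPred_eq, rank_of_le_one_iff_crossProduct_eq_zero,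
    crossProduct_gradient_eq_zero_iff hab hbc hac]
  simp

/-- For pairwise distinct `a b c` and `α ≠ 0`, the set `R_{α,0,0}`
is the x-axis together with a line parallel to the y-axis through
`(−α/(2(a−b)), 0, 0)` and a line parallel to the z-axis through `(−α/(2(a−c)), 0, 0)`. -/
theorem stmt_4 (a b c α : ℝ) (hab : a ≠ b) (hbc : b ≠ c) (hac : a ≠ c) (hα : α ≠ 0) :
    {p : ℝ × ℝ × ℝ |
        (!![2*a*p.1 + α, 2*b*p.2.1, 2*c*p.2.2; p.1, p.2.1, p.2.2] :
          Matrix (Fin 2) (Fin 3) ℝ).rank ≤ 1} =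
      {q : ℝ × ℝ × ℝ | ∃ x : ℝ, q = (x, 0, 0)} ∪
      {q : ℝ × ℝ × ℝ | ∃ y : ℝ, q = (-α / (2*(a-b)), y, 0)} ∪
      {q : ℝ × ℝ × ℝ | ∃ z : ℝ, q = (-α / (2*(a-c)), 0, z)} :=
  stmt_4_general a b c α hab hbc hac
end

section
/- Let a, b, c be pairwise distinct real numbers and let γ ≠ 0. Then R_{0,0,γ} = {(0,0,z) : z ∈ ℝ} ∪ {(0, y, γ/(2(b−c))) : y ∈ ℝ} ∪ {(x, 0, γ/(2(a−c))) : x ∈ ℝ}. In particular the two crossing points on the z-axis, namely (0,0,γ/(2(b−c))) and (0,0,γ/(2(a−c))), are distinct. -/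
/-!
A `2 × n` matrix has rank at most one exactly when all its `2 × 2` minors vanish. For the
matrix `F_{0,0,γ}` the three minors factor as `x y (a - b)`, `x (2 (a - c) z - γ)` and
`y (2 (b - c) z - γ)`, so for pairwise distinct `a, b, c` their common zero set is the union of
the three lines. The crossing points differ because `γ ≠ 0` and `a ≠ b`.
-/

namespace Matrix

variable {K : Type*} [Field K] {n : Type*} [Fintype n]

theorem minor_eq_of_rank_le_one {M : Matrix (Fin 2) n K} (h : M.rank ≤ 1) (i j : n) :
    M 0 i * M 1 j = M 0 j * M 1 i := by
  by_contra hne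
  have hdet : (M.submatrix id ![i, j]).det ≠ 0 := by
    rw [det_fin_two]
    simpa [sub_eq_zero] using hne
  have := (rank_of_det_ne_zero hdet).symm.trans_le ((rank_submatrix_le M id ![i, j]).trans h)
  simp at this

theorem rank_le_one_of_minor_eq {M : Matrix (Fin 2) n K}
    (h : ∀ i j, M 0 i * M 1 j = M 0 j * M 1 i) : M.rank ≤ 1 := by
  by_cases h0 : M 0 = 0
  · suffices M = vecMulVec ![0, 1] (M 1) from this ▸ rank_vecMulVec_le _ _
    ext k l
    fin_cases k <;> simp [vecMulVec_apply, h0]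
  · obtain ⟨i, hi⟩ : ∃ i, M 0 i ≠ 0 := Function.ne_iff.mp h0
    suffices M = vecMulVec ![1, M 1 i / M 0 i] (M 0) from this ▸ rank_vecMulVec_le _ _
    ext k l
    fin_cases k
    · simp [vecMulVec_apply]
    · simp only [Fin.mk_one, Fin.isValue, vecMulVec_apply, cons_val_one, cons_val_fin_one]
      field_simp
      linear_combination h i l

theorem rank_le_one_iff_minor_eq {M : Matrix (Fin 2) n K} :
    M.rank ≤ 1 ↔ ∀ i j, M 0 i * M 1 j = M 0 j * M 1 i :=
  ⟨minor_eq_of_rank_le_one, rank_le_one_of_minor_eq⟩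

end Matrix

namespace RelativeEquilibria

variable {a b c γ x y z : ℝ}

theorem rank_le_one_iff : (!![2*a*x, 2*b*y, 2*c*z + γ; x, y, z] :
    Matrix (Fin 2) (Fin 3) ℝ).rank ≤ 1 ↔
      x * y * (a - b) = 0 ∧ x * (2 * (a - c) * z - γ) = 0 ∧ y * (2 * (b - c) * z - γ) = 0 := by
  rw [Matrix.rank_le_one_iff_minor_eq]
  simp only [Fin.isValue, Matrix.of_apply, Matrix.cons_val', Matrix.cons_val_fin_one,
    Matrix.cons_val_zero, Matrix.cons_val_one, Fin.forall_fin_succ, Matrix.cons_val_succ,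
    forall_const, true_and, and_true]
  constructor
  · rintro ⟨⟨hxy, hxz⟩, -, -, hyz⟩
    exact ⟨by linear_combination hxy / 2, by linear_combination hxz, by linear_combination -hyz⟩
  · rintro ⟨hxy, hxz, hyz⟩
    exact ⟨⟨by linear_combination 2 * hxy, by linear_combination hxz⟩,
      ⟨by linear_combination -2 * hxy, by linear_combination hyz⟩,
      by linear_combination -hxz, by linear_combination -hyz⟩

theorem factored_minors_iff (hab : a ≠ b) (hbc : b ≠ c) (hac : a ≠ c) :
    x * y * (a - b) = 0 ∧ x * (2 * (a - c) * z - γ) = 0 ∧ y * (2 * (b - c) * z - γ) = 0 ↔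
      ((x = 0 ∧ y = 0) ∨ (x = 0 ∧ z = γ / (2 * (b - c)))) ∨ (y = 0 ∧ z = γ / (2 * (a - c))) := by
  have hab' : a - b ≠ 0 := sub_ne_zero.2 hab
  have hbc' : 2 * (b - c) ≠ 0 := mul_ne_zero two_ne_zero (sub_ne_zero.2 hbc)
  have hac' : 2 * (a - c) ≠ 0 := mul_ne_zero two_ne_zero (sub_ne_zero.2 hac)
  simp only [mul_eq_zero, hab', or_false, sub_eq_zero, eq_div_iff hbc', eq_div_iff hac']
  rw [mul_comm _ z, mul_comm _ z]
  tauto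

end RelativeEquilibria

/-- For pairwise distinct `a b c` and `γ ≠ 0`, the set `R_{0,0,γ}`
is the z-axis together with two crossing lines, and the two crossing points on
the z-axis are distinct. -/
theorem stmt_5 (a b c γ : ℝ) (hab : a ≠ b) (hbc : b ≠ c) (hac : a ≠ c) (hγ : γ ≠ 0) :
    ({p : ℝ × ℝ × ℝ |
        (!![2*a*p.1, 2*b*p.2.1, 2*c*p.2.2 + γ; p.1, p.2.1, p.2.2] :
          Matrix (Fin 2) (Fin 3) ℝ).rank ≤ 1} =
      {q : ℝ × ℝ × ℝ | ∃ z : ℝ, q = (0, 0, z)} ∪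
      {q : ℝ × ℝ × ℝ | ∃ y : ℝ, q = (0, y, γ / (2*(b-c)))} ∪
      {q : ℝ × ℝ × ℝ | ∃ x : ℝ, q = (x, 0, γ / (2*(a-c)))}) ∧
    ((0, 0, γ / (2*(b-c))) : ℝ × ℝ × ℝ) ≠ (0, 0, γ / (2*(a-c))) := by
  refine ⟨?_, ?_⟩
  · ext ⟨x, y, z⟩
    simp only [Set.mem_ofPred_eq, Set.mem_union, Prod.mk.injEq, exists_and_left, existsAndEq,
      and_true, true_and, exists_and_right]
    rw [RelativeEquilibria.rank_le_one_iff, RelativeEquilibria.factored_minors_iff hab hbc hac]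
  · simp only [ne_eq, Prod.mk.injEq, true_and, div_eq_mul_inv, mul_right_inj' hγ, inv_inj]
    intro h
    exact hab (by linarith)
end

section
/- Let a, b, c be pairwise distinct real numbers and let β ≠ 0. Then R_{0,β,0} = {(0,y,0) : y ∈ ℝ} ∪ {(x, β/(2(a−b)), 0) : x ∈ ℝ} ∪ {(0, −β/(2(b−c)), z) : z ∈ ℝ}. In particular, if a > b > c, the two crossing points (0, β/(2(a−b)), 0) and (0, −β/(2(b−c)), 0) lie on opposite sides of the origin on the y-axis. -/
/-!
A `2 × 3` matrix has rank at most one exactly when the cross product of its rows vanishes. For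
`F_{0,β,0}(x,y,z)` that cross product is, up to nonzero factors,
`(z (2(b-c)y + β), (a-c) x z, x (2(a-b)y - β))`; since `a ≠ c`, one of `x`, `z` vanishes,
and the remaining factor pins `y` on the line through the other coordinate axis.
-/

open Matrix

theorem Matrix.rank_le_one_iff_crossProduct_eq_zero {F : Type*} [Field F]
    (M : Matrix (Fin 2) (Fin 3) F) : M.rank ≤ 1 ↔ M 0 ⨯₃ M 1 = 0 := by
  have hrow : M.row = ![M 0, M 1] := by ext i j; fin_cases i <;> rfl
  have := M.rank_lt_card_height_iff
  rw [Fintype.card_fin, Nat.lt_succ_iff, hrow] at this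
  rw [this, ← crossProduct_ne_zero_iff_linearIndependent, not_not]

lemma rank_relEquilibriumMatrix_le_one_iff (a b c β x y z : ℝ) :
    (!![2*a*x, 2*b*y + β, 2*c*z; x, y, z] : Matrix (Fin 2) (Fin 3) ℝ).rank ≤ 1 ↔
      z * (2*(b-c)*y + β) = 0 ∧ (a - c) * (x * z) = 0 ∧ x * (2*(a-b)*y - β) = 0 := by
  rw [Matrix.rank_le_one_iff_crossProduct_eq_zero, cross_apply]
  simp only [of_apply, cons_val', cons_val_one, cons_val_zero, cons_val_fin_one, cons_val,
    funext_iff, Pi.zero_apply, Fin.forall_fin_succ, cons_val_succ, forall_const, sub_eq_zero]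
  constructor <;> rintro ⟨h₀, h₁, h₂⟩
  · exact ⟨by linear_combination h₀, by linear_combination -h₁ / 2,
      by linear_combination h₂⟩
  · exact ⟨by linear_combination h₀, by linear_combination -2 * h₁,
      by linear_combination h₂⟩

lemma relEquilibrium_equations_iff (a b c β x y z : ℝ) (hab : a ≠ b) (hbc : b ≠ c)
    (hac : a ≠ c) :
    (z * (2*(b-c)*y + β) = 0 ∧ (a - c) * (x * z) = 0 ∧ x * (2*(a-b)*y - β) = 0) ↔
      (x = 0 ∧ z = 0) ∨ (y = β / (2*(a-b)) ∧ z = 0) ∨ (x = 0 ∧ y = -β / (2*(b-c))) := by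
  have hab' : 2 * (a - b) ≠ 0 := by simpa [sub_eq_zero] using hab
  have hbc' : 2 * (b - c) ≠ 0 := by simpa [sub_eq_zero] using hbc
  have hac' : a - c ≠ 0 := sub_ne_zero.2 hac
  rw [eq_div_iff hab', eq_div_iff hbc']
  simp only [mul_eq_zero, hac', false_or]
  constructor
  · rintro ⟨h₀, hx | hz, h₂⟩
    · rcases h₀ with hz | hy
      · exact .inl ⟨hx, hz⟩
      · exact .inr (.inr ⟨hx, by linarith⟩)
    · rcases h₂ with hx | hy
      · exact .inl ⟨hx, hz⟩
      · exact .inr (.inl ⟨by linarith, hz⟩)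
  · rintro (⟨hx, hz⟩ | ⟨hy, hz⟩ | ⟨hx, hy⟩)
    · exact ⟨.inl hz, .inl hx, .inl hx⟩
    · exact ⟨.inl hz, .inr hz, .inr (by linarith)⟩
    · exact ⟨.inr (by linarith), .inl hx, .inl hx⟩

lemma crossing_points_mul_neg {a b c β : ℝ} (hab : b < a) (hbc : c < b) (hβ : β ≠ 0) :
    β / (2*(a-b)) * (-β / (2*(b-c))) < 0 := by
  rw [neg_div, mul_neg, neg_lt_zero, div_mul_div_comm]
  exact div_pos (mul_self_pos.2 hβ)
    (mul_pos (mul_pos two_pos (sub_pos.2 hab)) (mul_pos two_pos (sub_pos.2 hbc)))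

/-- For pairwise distinct `a b c` and `β ≠ 0`, the set `R_{0,β,0}`
is the y-axis together with two crossing lines; moreover if `a > b > c` the two
crossing points lie on opposite sides of the origin on the y-axis. -/
theorem stmt_6 (a b c β : ℝ) (hab : a ≠ b) (hbc : b ≠ c) (hac : a ≠ c) (hβ : β ≠ 0) :
    ({p : ℝ × ℝ × ℝ |
        (!![2*a*p.1, 2*b*p.2.1 + β, 2*c*p.2.2; p.1, p.2.1, p.2.2] :
          Matrix (Fin 2) (Fin 3) ℝ).rank ≤ 1} =
      {q : ℝ × ℝ × ℝ | ∃ y : ℝ, q = (0, y, 0)} ∪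
      {q : ℝ × ℝ × ℝ | ∃ x : ℝ, q = (x, β / (2*(a-b)), 0)} ∪
      {q : ℝ × ℝ × ℝ | ∃ z : ℝ, q = (0, -β / (2*(b-c)), z)}) ∧
    (a > b → b > c → (β / (2*(a-b))) * (-β / (2*(b-c))) < 0) := by
  refine ⟨?_, fun h₁ h₂ => crossing_points_mul_neg h₁ h₂ hβ⟩
  ext ⟨x, y, z⟩
  simp only [Set.mem_ofPred_eq, Set.mem_union, rank_relEquilibriumMatrix_le_one_iff,
    relEquilibrium_equations_iff a b c β x y z hab hbc hac, Prod.mk.injEq, existsAndEq,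
    true_and, and_true, or_assoc]
end

section
/- Let a, b, c be pairwise distinct real numbers and let α, β, γ all be nonzero. Suppose (x,y,z) ∈ ℝ³ is such that F_{α,β,γ}(x,y,z) has rank at most 1, and suppose q ∈ ℝ² satisfies q · F_{α,β,γ}(x,y,z) = 0 (row-vector times matrix), k ∈ ℝ³ satisfies F_{α,β,γ}(x,y,z) · k = 0 (matrix times column vector), and for every v = (v₁,v₂,v₃) ∈ ℝ³ one has q · M(v) · k = 0, where M(v) is the 2×3 matrix with first row (2a v₁, 2b v₂, 2c v₃) and second row (v₁, v₂, v₃). Then q = 0 or k = 0. (I.e., the map μ ↦ F_{α,β,γ}(μ) is transverse to the variety of matrices of rank at most 1 at every point of R_{α,β,γ}.) -/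
/-!
Pairing `q ⬝ M(v) ⬝ k` with the coordinate direction `v = eⱼ` gives `(2 aⱼ q₀ + q₁) kⱼ = 0`.
If `q₀ = 0` this forces `q = 0` or `k = 0`. If `q₀ ≠ 0`, the numbers `2 aⱼ q₀ + q₁` are pairwise
distinct, so `k` is supported on a single index `i`; then `F k = 0` reads
`(2 aᵢ xᵢ + αᵢ) kᵢ = 0` and `xᵢ kᵢ = 0`, whence `αᵢ kᵢ = 0` and `kᵢ = 0`.
-/

open Matrix

theorem eq_zero_of_ne_of_forall_mul_eq_zero {ι : Type*} {a : ι → ℝ} (ha : Function.Injective a)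
    {q₀ q₁ : ℝ} (hq₀ : q₀ ≠ 0) {k : ι → ℝ} (ht : ∀ j, (q₀ * (2 * a j) + q₁) * k j = 0) {i : ι}
    (hi : k i ≠ 0) {j : ι} (hji : j ≠ i) : k j = 0 := by
  have hai : q₀ * (2 * a i) + q₁ = 0 := (mul_eq_zero.mp (ht i)).resolve_right hi
  refine (mul_eq_zero.mp (ht j)).resolve_left fun haj => hji (ha ?_)
  have : q₀ * a j = q₀ * a i := by linarith
  exact mul_left_cancel₀ hq₀ this

section
variable {ι : Type*} [Fintype ι]

/-- The matrix `F_{α,β,γ}(x,y,z)` for an arbitrary number of coordinates; with `α = 0` it is the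
derivative `M(x)`. -/
def relEqMatrix (a α x : ι → ℝ) : Matrix (Fin 2) ι ℝ :=
  Matrix.of ![fun j => 2 * a j * x j + α j, x]

theorem vecMul_relEqMatrix_single_dotProduct [DecidableEq ι] (a : ι → ℝ) (q : Fin 2 → ℝ)
    (k : ι → ℝ) (j : ι) :
    q ᵥ* relEqMatrix a 0 (Pi.single j 1) ⬝ᵥ k = (q 0 * (2 * a j) + q 1) * k j := by
  simp [relEqMatrix, vecMul, dotProduct, Fin.sum_univ_two, Pi.single_apply, ← ite_add_zero]

theorem eq_zero_of_mulVec_relEqMatrix_eq_zero [DecidableEq ι] {a α x k : ι → ℝ} {i : ι}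
    (hα : α i ≠ 0) (hk : relEqMatrix a α x *ᵥ k = 0) (hsupp : ∀ j ≠ i, k j = 0) : k i = 0 := by
  have hsingle : k = Pi.single i (k i) := by
    ext j
    rcases eq_or_ne j i with rfl | hji
    · simp
    · simp [hsupp j hji, hji]
  rw [hsingle] at hk
  have h₀ : 2 * a i * x i * k i + α i * k i = 0 := by simpa [relEqMatrix] using congrFun hk 0
  have h₁ : x i * k i = 0 := by simpa [relEqMatrix] using congrFun hk 1
  have : α i * k i = 0 := by linear_combination h₀ - 2 * a i * h₁
  exact (mul_eq_zero.mp this).resolve_left hα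

theorem relEqMatrix_transversal [DecidableEq ι] {a α x : ι → ℝ} (ha : Function.Injective a)
    (hα : ∀ i, α i ≠ 0) {q : Fin 2 → ℝ} {k : ι → ℝ} (hk : relEqMatrix a α x *ᵥ k = 0)
    (htang : ∀ v, q ᵥ* relEqMatrix a 0 v ⬝ᵥ k = 0) : q = 0 ∨ k = 0 := by
  have ht : ∀ j, (q 0 * (2 * a j) + q 1) * k j = 0 := fun j => by
    rw [← vecMul_relEqMatrix_single_dotProduct]; exact htang _
  by_cases hq₀ : q 0 = 0
  · by_cases hq₁ : q 1 = 0
    · left; ext i; fin_cases i <;> assumption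
    · right; ext j; simpa [hq₀, hq₁] using ht j
  · right
    by_contra hk0
    obtain ⟨i, hi⟩ := Function.ne_iff.mp hk0
    exact hi (eq_zero_of_mulVec_relEqMatrix_eq_zero (hα i) hk
      fun j hji => eq_zero_of_ne_of_forall_mul_eq_zero ha hq₀ ht hi hji)

end

theorem stmt_8_general (a b c α β γ x y z : ℝ) (hab : a ≠ b) (hbc : b ≠ c) (hac : a ≠ c)
    (hα : α ≠ 0) (hβ : β ≠ 0) (hγ : γ ≠ 0)
    (q : Fin 2 → ℝ) (k : Fin 3 → ℝ)
    (hk : (!![2*a*x + α, 2*b*y + β, 2*c*z + γ; x, y, z] :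
        Matrix (Fin 2) (Fin 3) ℝ) *ᵥ k = 0)
    (htang : ∀ v : Fin 3 → ℝ,
      (q ᵥ* (!![2*a*(v 0), 2*b*(v 1), 2*c*(v 2); v 0, v 1, v 2] :
        Matrix (Fin 2) (Fin 3) ℝ)) ⬝ᵥ k = 0) :
    q = 0 ∨ k = 0 := by
  have hF : (!![2*a*x + α, 2*b*y + β, 2*c*z + γ; x, y, z] : Matrix (Fin 2) (Fin 3) ℝ) =
      relEqMatrix ![a, b, c] ![α, β, γ] ![x, y, z] := by
    ext i j; fin_cases i <;> fin_cases j <;> rfl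
  have hM (v : Fin 3 → ℝ) : (!![2*a*(v 0), 2*b*(v 1), 2*c*(v 2); v 0, v 1, v 2] :
      Matrix (Fin 2) (Fin 3) ℝ) = relEqMatrix ![a, b, c] 0 v := by
    ext i j; fin_cases i <;> fin_cases j <;> simp [relEqMatrix]
  have ha : Function.Injective ![a, b, c] := by
    simp only [vecCons, Fin.cons_injective_iff]
    simp [hab, hbc, hac, Function.injective_of_subsingleton]
  refine relEqMatrix_transversal ha (fun i => ?_) (hF ▸ hk) fun v => hM v ▸ htang v
  fin_cases i <;> assumption

/-- For pairwise distinct `a b c` and `α β γ` all nonzero, the map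
`μ ↦ F_{α,β,γ}(μ)` is transverse to the rank-≤1 variety at every point of
`R_{α,β,γ}`: if `q` is in the left kernel of `F`, `k` in the kernel of `F`, and
`q ⬝ M(v) ⬝ k = 0` for all directions `v`, then `q = 0` or `k = 0`. -/
theorem stmt_8 (a b c α β γ x y z : ℝ) (hab : a ≠ b) (hbc : b ≠ c) (hac : a ≠ c)
    (hα : α ≠ 0) (hβ : β ≠ 0) (hγ : γ ≠ 0)
    (hrank : (!![2*a*x + α, 2*b*y + β, 2*c*z + γ; x, y, z] :
        Matrix (Fin 2) (Fin 3) ℝ).rank ≤ 1)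
    (q : Fin 2 → ℝ) (k : Fin 3 → ℝ)
    (hq : q ᵥ* (!![2*a*x + α, 2*b*y + β, 2*c*z + γ; x, y, z] :
        Matrix (Fin 2) (Fin 3) ℝ) = 0)
    (hk : (!![2*a*x + α, 2*b*y + β, 2*c*z + γ; x, y, z] :
        Matrix (Fin 2) (Fin 3) ℝ) *ᵥ k = 0)
    (htang : ∀ v : Fin 3 → ℝ,
      (q ᵥ* (!![2*a*(v 0), 2*b*(v 1), 2*c*(v 2); v 0, v 1, v 2] :
        Matrix (Fin 2) (Fin 3) ℝ)) ⬝ᵥ k = 0) :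
    q = 0 ∨ k = 0 :=
  stmt_8_general a b c α β γ x y z hab hbc hac hα hβ hγ q k hk htang
end

section
/- Let a, b, c be pairwise distinct real numbers and let β ≠ 0 and γ ≠ 0. At the point μ* = (0, β/(2(a−b)), γ/(2(a−c))), the matrix F_{0,β,γ}(μ*) has rank exactly 1, and there exist nonzero vectors q ∈ ℝ² and k ∈ ℝ³ with q · F_{0,β,γ}(μ*) = 0, F_{0,β,γ}(μ*) · k = 0, and q · M(v) · k = 0 for every v ∈ ℝ³, where M(v) is the 2×3 matrix with first row (2a v₁, 2b v₂, 2c v₃) and second row (v₁, v₂, v₃). (I.e., the map μ ↦ F_{0,β,γ}(μ) fails to be transverse to the rank ≤ 1 variety at μ*.) -/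
/-!
At `μ*` the second coordinate of the first row is `2bμ₂ + β = 2aμ₂`, and likewise for the third,
so the first row of `F_{0,β,γ}(μ*)` is `2a` times the second, which is nonzero: the rank is one,
`q = (1, -2a)` spans the left kernel, and since the first column vanishes `k = e₀` lies in the
kernel. Then `q ⬝ M(v) ⬝ e₀ = 2a v₀ - 2a v₀ = 0` for every direction `v`.
-/

open Matrix

section TwoRows

variable {K : Type*} {n : Type*}

theorem Matrix.rank_eq_one_of_row_zero_eq_smul [Field K] [Fintype n] (A : Matrix (Fin 2) n K)
    (t : K) (h₀ : A 0 = t • A 1) (h₁ : A 1 ≠ 0) : A.rank = 1 := by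
  have hspan : Submodule.span K (Set.range A) = K ∙ A 1 := by
    refine le_antisymm (Submodule.span_le.mpr ?_) (Submodule.span_le.mpr ?_)
    · rintro _ ⟨i, rfl⟩
      fin_cases i
      · exact h₀ ▸ Submodule.smul_mem _ t (Submodule.mem_span_singleton_self _)
      · exact Submodule.mem_span_singleton_self _
    · exact Set.singleton_subset_iff.mpr (Submodule.subset_span ⟨1, rfl⟩)
  rw [rank_eq_finrank_span_row, show Set.range A.row = Set.range A from rfl, hspan,
    finrank_span_singleton h₁]

theorem Matrix.vecMul_eq_zero_of_row_zero_eq_smul [CommRing K] (A : Matrix (Fin 2) n K) (t : K)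
    (h₀ : A 0 = t • A 1) : ![1, -t] ᵥ* A = 0 := by
  ext j
  simp [vecMul, dotProduct, Fin.sum_univ_two, congrFun h₀ j]

end TwoRows

theorem mul_div_two_mul_sub_add_self {a b β : ℝ} (hab : a ≠ b) :
    2 * b * (β / (2 * (a - b))) + β = 2 * a * (β / (2 * (a - b))) := by
  have : a - b ≠ 0 := sub_ne_zero.mpr hab
  field_simp
  ring

theorem stmt_9_general (a b c β γ : ℝ) (hab : a ≠ b) (hac : a ≠ c)
    (hβ : β ≠ 0) :
    (!![2*a*(0:ℝ), 2*b*(β / (2*(a-b))) + β, 2*c*(γ / (2*(a-c))) + γ;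
        (0:ℝ), β / (2*(a-b)), γ / (2*(a-c))] :
      Matrix (Fin 2) (Fin 3) ℝ).rank = 1 ∧
    ∃ (q : Fin 2 → ℝ) (k : Fin 3 → ℝ), q ≠ 0 ∧ k ≠ 0 ∧
      q ᵥ* (!![2*a*(0:ℝ), 2*b*(β / (2*(a-b))) + β, 2*c*(γ / (2*(a-c))) + γ;
          (0:ℝ), β / (2*(a-b)), γ / (2*(a-c))] : Matrix (Fin 2) (Fin 3) ℝ) = 0 ∧
      (!![2*a*(0:ℝ), 2*b*(β / (2*(a-b))) + β, 2*c*(γ / (2*(a-c))) + γ;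
          (0:ℝ), β / (2*(a-b)), γ / (2*(a-c))] : Matrix (Fin 2) (Fin 3) ℝ) *ᵥ k = 0 ∧
      ∀ v : Fin 3 → ℝ,
        (q ᵥ* (!![2*a*(v 0), 2*b*(v 1), 2*c*(v 2); v 0, v 1, v 2] :
          Matrix (Fin 2) (Fin 3) ℝ)) ⬝ᵥ k = 0 := by
  set F : Matrix (Fin 2) (Fin 3) ℝ := !![2*a*(0:ℝ), 2*b*(β / (2*(a-b))) + β,
    2*c*(γ / (2*(a-c))) + γ; (0:ℝ), β / (2*(a-b)), γ / (2*(a-c))]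
  have hrows : F 0 = (2 * a) • F 1 := by
    ext j
    fin_cases j <;> simp [F, mul_div_two_mul_sub_add_self hab, mul_div_two_mul_sub_add_self hac]
  have hrow₁ : F 1 ≠ 0 := fun h ↦ by
    simpa [F, hβ, sub_eq_zero, hab] using congrFun h 1
  refine ⟨F.rank_eq_one_of_row_zero_eq_smul _ hrows hrow₁, ![1, -(2 * a)], Pi.single 0 1,
    by simp, by simp, F.vecMul_eq_zero_of_row_zero_eq_smul _ hrows, ?_, fun v ↦ ?_⟩
  · ext i
    fin_cases i <;> simp [F]
  · rw [dotProduct_single_one]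
    simp [vecMul, dotProduct, Fin.sum_univ_two]

/-- For pairwise distinct `a b c` and `β γ` nonzero, at the point
`μ* = (0, β/(2(a−b)), γ/(2(a−c)))` the matrix `F_{0,β,γ}(μ*)` has rank exactly 1
and transversality to the rank-≤1 variety fails: there are nonzero `q`, `k` in
the left kernel and kernel respectively with `q ⬝ M(v) ⬝ k = 0` for all `v`. -/
theorem stmt_9 (a b c β γ : ℝ) (hab : a ≠ b) (hbc : b ≠ c) (hac : a ≠ c)
    (hβ : β ≠ 0) (hγ : γ ≠ 0) :
    (!![2*a*(0:ℝ), 2*b*(β / (2*(a-b))) + β, 2*c*(γ / (2*(a-c))) + γ;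
        (0:ℝ), β / (2*(a-b)), γ / (2*(a-c))] :
      Matrix (Fin 2) (Fin 3) ℝ).rank = 1 ∧
    ∃ (q : Fin 2 → ℝ) (k : Fin 3 → ℝ), q ≠ 0 ∧ k ≠ 0 ∧
      q ᵥ* (!![2*a*(0:ℝ), 2*b*(β / (2*(a-b))) + β, 2*c*(γ / (2*(a-c))) + γ;
          (0:ℝ), β / (2*(a-b)), γ / (2*(a-c))] : Matrix (Fin 2) (Fin 3) ℝ) = 0 ∧
      (!![2*a*(0:ℝ), 2*b*(β / (2*(a-b))) + β, 2*c*(γ / (2*(a-c))) + γ;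
          (0:ℝ), β / (2*(a-b)), γ / (2*(a-c))] : Matrix (Fin 2) (Fin 3) ℝ) *ᵥ k = 0 ∧
      ∀ v : Fin 3 → ℝ,
        (q ᵥ* (!![2*a*(v 0), 2*b*(v 1), 2*c*(v 2); v 0, v 1, v 2] :
          Matrix (Fin 2) (Fin 3) ℝ)) ⬝ᵥ k = 0 :=
  stmt_9_general a b c β γ hab hac hβ
end

section
/- Let h : ℝ³ → ℝ be a C^∞ function whose gradient at the origin is nonzero. Then there exists ε > 0 such that for every r with 0 < r < ε, the set { μ ∈ ℝ³ : ‖μ‖ = r and ∇h(μ) = λμ for some λ ∈ ℝ } has exactly two elements. -/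
open Metric Set Function

/-- Lipschitz estimate for the normalization map away from zero. -/
lemma stmt12_normalize_lip {E : Type*} [NormedAddCommGroup E] [NormedSpace ℝ E]
    {c : ℝ} (hc : 0 < c) {y z : E} (hy : c ≤ ‖y‖) (hz : c ≤ ‖z‖) :
    ‖‖y‖⁻¹ • y - ‖z‖⁻¹ • z‖ ≤ (2 / c) * ‖y - z‖ := by
  have hy0 : 0 < ‖y‖ := lt_of_lt_of_le hc hy
  have hz0 : 0 < ‖z‖ := lt_of_lt_of_le hc hz
  have hdecomp : ‖y‖⁻¹ • y - ‖z‖⁻¹ • z = ‖y‖⁻¹ • (y - z) + (‖y‖⁻¹ - ‖z‖⁻¹) • z := by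
    rw [smul_sub, sub_smul]; abel
  have h1 : ‖‖y‖⁻¹ • (y - z)‖ = ‖y‖⁻¹ * ‖y - z‖ := by
    rw [norm_smul, Real.norm_eq_abs, abs_of_pos (by positivity)]
  have h3 : ‖(‖y‖⁻¹ - ‖z‖⁻¹) • z‖ ≤ ‖y‖⁻¹ * ‖y - z‖ := by
    rw [norm_smul, Real.norm_eq_abs]
    have he : |‖y‖⁻¹ - ‖z‖⁻¹| = |‖z‖ - ‖y‖| / (‖y‖ * ‖z‖) := by
      rw [inv_sub_inv hy0.ne' hz0.ne', abs_div, abs_of_pos (mul_pos hy0 hz0)]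
    rw [he]
    have habs : |‖z‖ - ‖y‖| ≤ ‖y - z‖ := by
      rw [abs_sub_comm]; exact abs_norm_sub_norm_le y z
    calc |‖z‖ - ‖y‖| / (‖y‖ * ‖z‖) * ‖z‖ = |‖z‖ - ‖y‖| / ‖y‖ := by
          field_simp
      _ ≤ ‖y - z‖ / ‖y‖ := by gcongr
      _ = ‖y‖⁻¹ * ‖y - z‖ := by ring
  have hinv : ‖y‖⁻¹ ≤ c⁻¹ := by
    exact inv_anti₀ hc hy
  calc ‖‖y‖⁻¹ • y - ‖z‖⁻¹ • z‖
      ≤ ‖‖y‖⁻¹ • (y - z)‖ + ‖(‖y‖⁻¹ - ‖z‖⁻¹) • z‖ := by rw [hdecomp]; exact norm_add_le _ _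
    _ ≤ ‖y‖⁻¹ * ‖y - z‖ + ‖y‖⁻¹ * ‖y - z‖ := by rw [h1]; gcongr
    _ = 2 * ‖y‖⁻¹ * ‖y - z‖ := by ring
    _ ≤ (2 / c) * ‖y - z‖ := by
        have : 2 * ‖y‖⁻¹ ≤ 2 / c := by rw [div_eq_mul_inv]; gcongr
        exact mul_le_mul_of_nonneg_right this (norm_nonneg _)

/-- Main lemma: a `C¹` vector field nonvanishing at `0` is parallel to the radius
at exactly two points of each sufficiently small sphere. -/
lemma stmt12_main {E : Type*} [NormedAddCommGroup E] [InnerProductSpace ℝ E] [CompleteSpace E]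
    (g : E → E) (hg : ContDiff ℝ 1 g) (hg0 : g 0 ≠ 0) :
    ∃ ε > 0, ∀ r : ℝ, 0 < r → r < ε →
      ({μ : E | ‖μ‖ = r ∧ ∃ lam : ℝ, g μ = lam • μ}.encard = 2) := by
  have hc : 0 < ‖g 0‖ := norm_pos_iff.mpr hg0
  set c : ℝ := ‖g 0‖ with hc_def
  set M : ℝ := ‖fderiv ℝ g 0‖ + 1 with hM_def
  have hM : 0 < M := by positivity
  -- eventually: lower bound on ‖g‖ and upper bound on ‖fderiv g‖
  have hev1 : ∀ᶠ x in nhds (0 : E), c / 2 < ‖g x‖ := by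
    have hca : ContinuousAt (fun x => ‖g x‖) 0 := (hg.continuous.norm).continuousAt
    exact continuousAt_const.eventually_lt hca (half_lt_self hc)
  have hev2 : ∀ᶠ x in nhds (0 : E), ‖fderiv ℝ g x‖ < M := by
    have : ContinuousAt (fun x => ‖fderiv ℝ g x‖) 0 :=
      ((hg.continuous_fderiv one_ne_zero).norm).continuousAt
    exact this.eventually_lt continuousAt_const (by simp [hM_def])
  obtain ⟨δ, hδpos, hδ⟩ := Metric.eventually_nhds_iff_ball.mp (hev1.and hev2)
  -- Lipschitz bound for g on ball 0 δ
  have hgdiff : Differentiable ℝ g := hg.differentiable one_ne_zero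
  have hglip : ∀ x ∈ ball (0:E) δ, ∀ y ∈ ball (0:E) δ, ‖g y - g x‖ ≤ M * ‖y - x‖ := by
    intro x hx y hy
    exact (convex_ball 0 δ).norm_image_sub_le_of_norm_fderiv_le
      (fun z _ => hgdiff z) (fun z hz => le_of_lt (hδ z hz).2) hx hy
  set G : E → E := fun x => ‖g x‖⁻¹ • g x with hG_def
  set L : ℝ := (2 / (c / 2)) * M with hL_def
  have hL : 0 < L := by positivity
  have hGnorm : ∀ x ∈ ball (0:E) δ, ‖G x‖ = 1 := by
    intro x hx
    have h1 : 0 < ‖g x‖ := lt_trans (by positivity) (hδ x hx).1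
    simp only [hG_def, norm_smul, Real.norm_eq_abs, abs_of_pos (inv_pos.mpr h1)]
    field_simp
  have hGlip : ∀ x ∈ ball (0:E) δ, ∀ y ∈ ball (0:E) δ, ‖G x - G y‖ ≤ L * ‖x - y‖ := by
    intro x hx y hy
    have h1 : c / 2 ≤ ‖g x‖ := le_of_lt (hδ x hx).1
    have h2 : c / 2 ≤ ‖g y‖ := le_of_lt (hδ y hy).1
    calc ‖G x - G y‖ ≤ (2 / (c / 2)) * ‖g x - g y‖ :=
          stmt12_normalize_lip (by positivity) h1 h2
      _ ≤ (2 / (c / 2)) * (M * ‖x - y‖) := by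
          gcongr; exact hglip y hy x hx
      _ = L * ‖x - y‖ := by rw [hL_def]; ring
  -- choose ε
  refine ⟨min (δ / 2) (1 / (2 * L)), by positivity, ?_⟩
  intro r hr hrε
  have hrδ : r < δ / 2 := lt_of_lt_of_le hrε (min_le_left _ _)
  have hrL : r * L < 1 := by
    have : r < 1 / (2 * L) := lt_of_lt_of_le hrε (min_le_right _ _)
    calc r * L < (1 / (2 * L)) * L := by gcongr
      _ = 1 / 2 := by field_simp
      _ < 1 := by norm_num
  have hBsub : closedBall (0:E) (δ/2) ⊆ ball (0:E) δ := by
    apply closedBall_subset_ball; linarith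
  -- unique fixed points for each sign
  have claim : ∀ s : ℝ, s = 1 ∨ s = -1 →
      ∃ μ : E, (μ ∈ closedBall (0:E) (δ/2) ∧ μ = (s*r) • G μ) ∧
        ∀ ν : E, ν ∈ closedBall (0:E) (δ/2) → ν = (s*r) • G ν → ν = μ := by
    intro s hs
    have habs : |s| = 1 := by rcases hs with h|h <;> simp [h]
    set S := closedBall (0:E) (δ/2)
    haveI : Nonempty S := ⟨⟨0, mem_closedBall_self (by positivity)⟩⟩
    haveI : CompleteSpace S := (Metric.isClosed_closedBall (x := (0:E)) (ε := δ/2)).completeSpace_coe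
    have hmaps : ∀ x : E, x ∈ S → (s*r) • G x ∈ S := by
      intro x hx
      have : ‖(s*r) • G x‖ = r := by
        rw [norm_smul, hGnorm x (hBsub hx), mul_one, Real.norm_eq_abs, abs_mul, habs,
          one_mul, abs_of_pos hr]
      simp only [S, mem_closedBall, dist_zero_right]
      rw [this]; linarith
    set f : S → S := fun x => ⟨(s*r) • G x.1, hmaps x.1 x.2⟩ with hf_def
    have hcontr : ContractingWith (Real.toNNReal (r * L)) f := by
      constructor
      · exact_mod_cast Real.toNNReal_lt_one.mpr hrL
      · apply LipschitzWith.of_dist_le_mul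
        intro x y
        have hx := hBsub x.2
        have hy := hBsub y.2
        simp only [Subtype.dist_eq, dist_eq_norm, hf_def]
        calc ‖(s*r) • G x.1 - (s*r) • G y.1‖ = |s*r| * ‖G x.1 - G y.1‖ := by
              rw [← smul_sub, norm_smul, Real.norm_eq_abs]
          _ = r * ‖G x.1 - G y.1‖ := by rw [abs_mul, habs, one_mul, abs_of_pos hr]
          _ ≤ r * (L * ‖x.1 - y.1‖) := by gcongr; exact hGlip x.1 hx y.1 hy
          _ = (Real.toNNReal (r * L) : ℝ) * ‖x.1 - y.1‖ := by
              rw [Real.coe_toNNReal _ (by positivity)]; ring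
    set μ₀ := ContractingWith.fixedPoint f hcontr with hμ₀
    refine ⟨μ₀.1, ⟨μ₀.2, ?_⟩, ?_⟩
    · have := hcontr.fixedPoint_isFixedPt
      rw [IsFixedPt] at this
      have := congrArg Subtype.val this
      simp only [hf_def] at this
      exact this.symm
    · intro ν hν hfix
      have : IsFixedPt f ⟨ν, hν⟩ := by
        rw [IsFixedPt]
        apply Subtype.ext
        simp only [hf_def]
        exact hfix.symm
      have := hcontr.fixedPoint_unique this
      exact congrArg Subtype.val this
  obtain ⟨p, ⟨hpB, hpfix⟩, hpuniq⟩ := claim 1 (Or.inl rfl)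
  obtain ⟨q, ⟨hqB, hqfix⟩, hquniq⟩ := claim (-1) (Or.inr rfl)
  have hGp1 : ‖G p‖ = 1 := hGnorm p (hBsub hpB)
  have hGq1 : ‖G q‖ = 1 := hGnorm q (hBsub hqB)
  have hpnorm : ‖p‖ = r := by
    rw [hpfix, norm_smul, hGp1, mul_one, Real.norm_eq_abs, one_mul, abs_of_pos hr]
  have hqnorm : ‖q‖ = r := by
    rw [hqfix, norm_smul, hGq1, mul_one, Real.norm_eq_abs]
    rw [abs_of_neg (by linarith : (-1:ℝ)*r < 0)]; ring
  have hpne : p ≠ q := by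
    intro hpq
    have h1 : p = r • G p := by rw [show r = 1 * r by ring]; exact hpfix
    have h2 : p = (-r) • G p := by
      conv_lhs => rw [hpq]
      rw [hqfix, ← hpq]
      congr 1
      ring
    have key : r • G p = (-r) • G p := h1.symm.trans h2
    have hz : r • G p = 0 := by
      rw [neg_smul] at key
      have h2r : r • G p + r • G p = 0 := by
        nth_rewrite 1 [key]
        simp
      have := congrArg norm h2r
      rw [← two_smul ℝ (r • G p), norm_smul, norm_zero] at this
      have hnn : ‖(2:ℝ)‖ ≠ 0 := by norm_num
      have : ‖r • G p‖ = 0 := by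
        rcases mul_eq_zero.mp this with h | h
        · exact absurd h hnn
        · exact h
      exact norm_eq_zero.mp this
    have hn := congrArg norm hz
    rw [norm_smul, hGp1, mul_one, Real.norm_eq_abs, norm_zero, abs_of_pos hr] at hn
    linarith
  have hgp_pos : 0 < ‖g p‖ := lt_trans (by positivity) (hδ p (hBsub hpB)).1
  have hgq_pos : 0 < ‖g q‖ := lt_trans (by positivity) (hδ q (hBsub hqB)).1
  have hset : {μ : E | ‖μ‖ = r ∧ ∃ lam : ℝ, g μ = lam • μ} = {p, q} := by
    ext μ
    simp only [mem_setOf_eq, mem_insert_iff, mem_singleton_iff]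
    constructor
    · rintro ⟨hμr, lam, hlam⟩
      have hμB : μ ∈ closedBall (0:E) (δ/2) := by
        simp only [mem_closedBall, dist_zero_right]; linarith [hμr, hrδ]
      have hgμ_pos : 0 < ‖g μ‖ := lt_trans (by positivity) (hδ μ (hBsub hμB)).1
      have hgμnorm : ‖g μ‖ = |lam| * r := by
        rw [hlam, norm_smul, Real.norm_eq_abs, hμr]
      have hlam0 : lam ≠ 0 := by
        intro h
        rw [h] at hgμnorm; simp at hgμnorm
        rw [hgμnorm] at hgμ_pos; simp at hgμ_pos
      have hGμ : G μ = (|lam| * r)⁻¹ • lam • μ := by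
        simp only [hG_def]
        rw [hgμnorm, hlam]
      rcases lt_or_gt_of_ne hlam0 with hneg | hpos
      · right
        apply hquniq μ hμB
        rw [hGμ, abs_of_neg hneg, smul_smul, smul_smul,
          show -1 * r * (-lam * r)⁻¹ * lam = 1 by field_simp, one_smul]
      · left
        apply hpuniq μ hμB
        rw [hGμ, abs_of_pos hpos, smul_smul, smul_smul,
          show 1 * r * (lam * r)⁻¹ * lam = 1 by field_simp, one_smul]
    · rintro (rfl | rfl)
      · refine ⟨hpnorm, ‖g μ‖ * r⁻¹, ?_⟩
        have hGμ : G μ = r⁻¹ • μ := by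
          conv_rhs => rw [hpfix]
          rw [smul_smul, show r⁻¹ * (1 * r) = 1 by field_simp, one_smul]
        calc g μ = ‖g μ‖ • G μ := by
              simp only [hG_def, smul_smul]
              rw [mul_inv_cancel₀ (ne_of_gt hgp_pos), one_smul]
          _ = ‖g μ‖ • r⁻¹ • μ := by rw [hGμ]
          _ = (‖g μ‖ * r⁻¹) • μ := (smul_smul _ _ _)
      · refine ⟨hqnorm, -(‖g μ‖ * r⁻¹), ?_⟩
        have hGμ : G μ = (-r⁻¹) • μ := by
          conv_rhs => rw [hqfix]
          rw [smul_smul, show -r⁻¹ * (-1 * r) = 1 by field_simp, one_smul]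
        calc g μ = ‖g μ‖ • G μ := by
              simp only [hG_def, smul_smul]
              rw [mul_inv_cancel₀ (ne_of_gt hgq_pos), one_smul]
          _ = ‖g μ‖ • (-r⁻¹) • μ := by rw [hGμ]
          _ = -(‖g μ‖ * r⁻¹) • μ := by rw [smul_smul]; congr 1; ring
  rw [hset]
  exact Set.encard_pair hpne

/-- If `h : ℝ³ → ℝ` is `C^∞` with nonzero gradient at the origin,
then for every sufficiently small radius `r > 0` the sphere of radius `r`
contains exactly two critical points of `h` restricted to the sphere
(Lagrange condition `∇h(μ) = λμ`). -/
theorem stmt_12 (h : EuclideanSpace ℝ (Fin 3) → ℝ)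
    (hsm : ContDiff ℝ (⊤ : ℕ∞) h) (hgrad : gradient h 0 ≠ 0) :
    ∃ ε > 0, ∀ r : ℝ, 0 < r → r < ε →
      ({μ : EuclideanSpace ℝ (Fin 3) | ‖μ‖ = r ∧
          ∃ lam : ℝ, gradient h μ = lam • μ}.encard = 2) := by
  apply stmt12_main (gradient h) ?_ hgrad
  have h1 : ContDiff ℝ 1 (fderiv ℝ h) := hsm.fderiv_right (by exact WithTop.coe_le_coe.mpr le_top)
  have h2 : gradient h = fun x =>
      (InnerProductSpace.toDual ℝ (EuclideanSpace ℝ (Fin 3))).symm (fderiv ℝ h x) := rfl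
  rw [h2]
  exact ((InnerProductSpace.toDual ℝ (EuclideanSpace ℝ (Fin 3))).symm.contDiff).comp h1
end

section
/- In the polynomial ring ℝ[x, y, z, k, l, m], let I be the ideal generated by the nine elements xy, yz, zx, xk, yl, zm, k−x, l−y, m−z. Then the quotient ring ℝ[x, y, z, k, l, m]/I is a finite-dimensional real vector space of dimension 4. -/
/-!
Modulo the ideal, `k, l, m` become `x, y, z`, and then `x, y, z` span a square-zero ideal
(`xk = x²`, `yl = y²`, `zm = z²`), so the quotient is spanned by `1, x, y, z`. Conversely,
the ideal lies in the kernel of the surjective algebra map to the trivial square-zero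
extension `ℝ ⊕ ℝ³` sending `x, k ↦ e₁`, `y, l ↦ e₂`, `z, m ↦ e₃`, so the dimension is at
least `4`.
-/

open MvPolynomial

theorem Algebra.adjoin_toSubmodule_eq_span_insert_one_of_mul_eq_zero
    {R A : Type*} [CommSemiring R] [Semiring A] [Algebra R A] {s : Set A}
    (hs : ∀ a ∈ s, ∀ b ∈ s, a * b = 0) :
    Subalgebra.toSubmodule (Algebra.adjoin R s) = Submodule.span R (insert 1 s) := by
  refine le_antisymm ?_ (Submodule.span_le.2 (Set.insert_subset (Algebra.adjoin R s).one_mem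
    Algebra.subset_adjoin))
  set p := Submodule.span R (insert 1 s)
  have hmul : p * p ≤ p := by
    rw [Submodule.span_mul_span, Submodule.span_le]
    rintro _ ⟨a, ha, b, hb, rfl⟩
    rcases ha with rfl | ha
    · simpa using Submodule.subset_span hb
    rcases hb with rfl | hb
    · simpa using Submodule.subset_span (Set.mem_insert_of_mem _ ha)
    simp [hs a ha b hb]
  have h1 : (1 : A) ∈ p := Submodule.subset_span (Set.mem_insert _ _)
  exact Algebra.adjoin_le (S := p.toSubalgebra h1
    fun x y hx hy => hmul (Submodule.mul_mem_mul hx hy)) fun a ha =>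
      Submodule.subset_span (Set.mem_insert_of_mem _ ha)

theorem TrivSqZeroExt.aeval_inr_surjective {σ R M : Type*} [CommRing R] [AddCommGroup M]
    [Module R M] [Module Rᵐᵒᵖ M] [IsCentralScalar R M] {v : σ → M}
    (hv : Submodule.span R (Set.range v) = ⊤) :
    Function.Surjective
      (aeval (fun i => inr (v i)) : MvPolynomial σ R →ₐ[R] TrivSqZeroExt R M) := by
  set φ : MvPolynomial σ R →ₐ[R] TrivSqZeroExt R M := aeval fun i => inr (v i)
  have hinr : ∀ m, inr m ∈ φ.range := by
    suffices ⊤ ≤ (Subalgebra.toSubmodule φ.range).comap (inrHom R M) from fun m => this trivial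
    rw [← hv, Submodule.span_le]
    rintro _ ⟨i, rfl⟩
    exact ⟨X i, aeval_X _ i⟩
  intro x
  rw [← inl_fst_add_inr_snd_eq x]
  exact φ.range.add_mem (φ.range.algebraMap_mem x.fst) (hinr x.snd)

/-- Generators of the ideal of `LC⁻(R₀) ∩ graph(dj)`, with `x, y, z, k, l, m = X 0, …, X 5`. -/
noncomputable def lcGraphGenerators : Set (MvPolynomial (Fin 6) ℝ) :=
  {X 0 * X 1, X 1 * X 2, X 2 * X 0, X 0 * X 3, X 1 * X 4, X 2 * X 5,
    X 3 - X 0, X 4 - X 1, X 5 - X 2}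

noncomputable abbrev lcGraphIdeal : Ideal (MvPolynomial (Fin 6) ℝ) :=
  Ideal.span lcGraphGenerators

namespace lcGraphIdeal

local notation "q" => Ideal.Quotient.mk lcGraphIdeal

lemma mk_generator_eq_zero : ∀ p ∈ lcGraphGenerators, q p = 0 :=
  fun _ hp => Ideal.Quotient.eq_zero_iff_mem.2 (Ideal.subset_span hp)

lemma mk_cotangent_X_eq_mk_X :
    q (X 3) = q (X 0) ∧ q (X 4) = q (X 1) ∧ q (X 5) = q (X 2) := by
  have h := mk_generator_eq_zero
  simp only [lcGraphGenerators, Set.mem_insert_iff, Set.mem_singleton_iff, forall_eq_or_imp,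
    forall_eq, map_sub, sub_eq_zero] at h
  exact h.2.2.2.2.2.2

lemma mk_X_mul_mk_X_eq_zero :
    ∀ a ∈ ({q (X 0), q (X 1), q (X 2)} : Set _), ∀ b ∈ ({q (X 0), q (X 1), q (X 2)} : Set _),
      a * b = 0 := by
  have h := mk_generator_eq_zero
  simp only [lcGraphGenerators, Set.mem_insert_iff, Set.mem_singleton_iff, forall_eq_or_imp,
    forall_eq, map_mul, map_sub, sub_eq_zero] at h
  obtain ⟨hxy, hyz, hzx, hxk, hyl, hzm, hk, hl, hm⟩ := h
  rw [hk] at hxk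
  rw [hl] at hyl
  rw [hm] at hzm
  simp only [Set.mem_insert_iff, Set.mem_singleton_iff, forall_eq_or_imp, forall_eq]
  refine ⟨⟨?_, ?_, ?_⟩, ⟨?_, ?_, ?_⟩, ⟨?_, ?_, ?_⟩⟩ <;> grind

lemma adjoin_mk_X_eq_top : Algebra.adjoin ℝ {q (X 0), q (X 1), q (X 2)} = ⊤ := by
  obtain ⟨hk, hl, hm⟩ := mk_cotangent_X_eq_mk_X
  rw [eq_top_iff, ← AlgHom.range_eq_top (Ideal.Quotient.mkₐ ℝ lcGraphIdeal) |>.2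
    (Ideal.Quotient.mkₐ_surjective ℝ _), aeval_unique (Ideal.Quotient.mkₐ ℝ lcGraphIdeal),
    ← Algebra.adjoin_range_eq_range_aeval, Algebra.adjoin_le_iff]
  rintro _ ⟨i, rfl⟩
  fin_cases i <;> exact Algebra.subset_adjoin (by simp [hk, hl, hm])

lemma span_one_mk_X_eq_top : Submodule.span ℝ {1, q (X 0), q (X 1), q (X 2)} = ⊤ := by
  rw [← Algebra.adjoin_toSubmodule_eq_span_insert_one_of_mul_eq_zero mk_X_mul_mk_X_eq_zero,
    adjoin_mk_X_eq_top, Algebra.top_toSubmodule]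

/-- Restriction to the graph `k = x, l = y, m = z`, followed by the first-order jet at the
origin, `p ↦ (p 0, ∇p 0)`. -/
noncomputable def firstOrderJet : MvPolynomial (Fin 6) ℝ →ₐ[ℝ] TrivSqZeroExt ℝ (Fin 3 → ℝ) :=
  aeval fun i => TrivSqZeroExt.inr (Pi.single (Fin.ofNat 3 i) 1)

lemma le_ker_firstOrderJet : lcGraphIdeal ≤ RingHom.ker firstOrderJet := by
  rw [Ideal.span_le]
  intro p hp
  simp only [lcGraphGenerators, Set.mem_insert_iff, Set.mem_singleton_iff] at hp
  rcases hp with rfl | rfl | rfl | rfl | rfl | rfl | rfl | rfl | rfl <;>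
    simp [firstOrderJet, TrivSqZeroExt.inr_mul_inr, Fin.ofNat]

lemma firstOrderJet_surjective : Function.Surjective firstOrderJet := by
  refine TrivSqZeroExt.aeval_inr_surjective (eq_top_iff.2 ?_)
  rw [← (Pi.basisFun ℝ (Fin 3)).span_eq, Submodule.span_le]
  rintro _ ⟨j, rfl⟩
  exact Submodule.subset_span ⟨Fin.castLE (by norm_num) j, by simp⟩

end lcGraphIdeal

/-- In `ℝ[x,y,z,k,l,m]` (variables `X 0, …, X 5`), the quotient by
the ideal `⟨xy, yz, zx, xk, yl, zm, k−x, l−y, m−z⟩` is a real vector space of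
dimension 4. -/
theorem stmt_15 :
    letI R := MvPolynomial (Fin 6) ℝ
    letI I : Ideal R := Ideal.span
      ({X 0 * X 1, X 1 * X 2, X 2 * X 0,
        X 0 * X 3, X 1 * X 4, X 2 * X 5,
        X 3 - X 0, X 4 - X 1, X 5 - X 2} : Set R)
    FiniteDimensional ℝ (R ⧸ I) ∧ Module.finrank ℝ (R ⧸ I) = 4 := by
  show FiniteDimensional ℝ (_ ⧸ lcGraphIdeal) ∧ Module.finrank ℝ (_ ⧸ lcGraphIdeal) = 4
  classical
  let q := Ideal.Quotient.mk lcGraphIdeal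
  let s : Finset (MvPolynomial (Fin 6) ℝ ⧸ lcGraphIdeal) := {1, q (X 0), q (X 1), q (X 2)}
  have hspan : Submodule.span ℝ (s : Set (MvPolynomial (Fin 6) ℝ ⧸ lcGraphIdeal)) = ⊤ := by
    simpa [s] using lcGraphIdeal.span_one_mk_X_eq_top
  have : FiniteDimensional ℝ (MvPolynomial (Fin 6) ℝ ⧸ lcGraphIdeal) :=
    ⟨hspan ▸ Submodule.fg_span s.finite_toSet⟩
  let jet := Ideal.Quotient.liftₐ lcGraphIdeal lcGraphIdeal.firstOrderJet
    lcGraphIdeal.le_ker_firstOrderJet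
  have hjet : Function.Surjective jet := fun y => by
    obtain ⟨p, rfl⟩ := lcGraphIdeal.firstOrderJet_surjective y
    exact ⟨q p, rfl⟩
  refine ⟨this, le_antisymm ?_ ?_⟩
  · calc Module.finrank ℝ (MvPolynomial (Fin 6) ℝ ⧸ lcGraphIdeal)
        = (s : Set (MvPolynomial (Fin 6) ℝ ⧸ lcGraphIdeal)).finrank ℝ := by
          rw [Set.finrank, hspan, finrank_top]
      _ ≤ s.card := finrank_span_finset_le_card s
      _ ≤ 4 := Finset.card_le_four
  · calc 4 = Module.finrank ℝ (ℝ × (Fin 3 → ℝ)) := by simp [Module.finrank_prod]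
      _ ≤ _ := LinearMap.finrank_le_finrank_of_surjective (f := jet.toLinearMap) hjet
end

section
/- Let a, b, c be pairwise distinct real numbers and let α, β, γ all be nonzero. Then there exists ε > 0 such that for every r with 0 < r < ε, the set { μ ∈ R_{α,β,γ} : ‖μ‖ = r } has exactly two elements, where ‖·‖ is the Euclidean norm on ℝ³. -/
/-!
A nonzero relative equilibrium `μ` satisfies `p i * μ i + α i = t * μ i` for a multiplier `t`;
as all `α i ≠ 0`, this forces `t ≠ p i` and `μ i = α i / (t - p i)`. So the nonzero relative
equilibria are the injective image of `ℝ ∖ {p i}` under the branch `t ↦ (α i / (t - p i))ᵢ`,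
along which `‖μ‖² = ∑ α i ² / (t - p i) ²`. For `M > |p i|` this function is bounded below by
`α i ² / (2M)²` on `(-M, M)`, while on each outer ray it is continuous, strictly monotone and
tends to `0` at infinity, so each small value is attained exactly once on either ray.
-/

open Set Filter Topology

theorem mul_add_eq_mul_iff_div_sub_eq {K : Type*} [Field K] {a p t x : K} (ha : a ≠ 0) :
    p * x + a = t * x ↔ t ≠ p ∧ a / (t - p) = x := by
  constructor
  · intro h
    have hx : (t - p) * x = a := by linear_combination -h
    have htp : t - p ≠ 0 := by rintro h0; simp [h0, eq_comm, ha] at hx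
    exact ⟨sub_ne_zero.mp htp, by rw [div_eq_iff htp, ← hx, mul_comm]⟩
  · rintro ⟨htp, rfl⟩
    field_simp [sub_ne_zero.mpr htp]
    ring

theorem Matrix.rank_of_two_rows_le_one_iff {K n : Type*} [Field K] [Fintype n] {u v : n → K}
    (hv : v ≠ 0) : (Matrix.of ![u, v]).rank ≤ 1 ↔ ∃ t : K, u = t • v := by
  constructor
  · intro h
    by_contra! hu
    have hli : LinearIndependent K (Matrix.of ![u, v]) :=
      linearIndependent_fin2.mpr ⟨hv, fun t ht => hu t ht.symm⟩
    have := hli.rank_matrix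
    simp at this
    omega
  · rintro ⟨t, rfl⟩
    convert Matrix.rank_vecMulVec_le ![t, 1] v
    ext i j
    fin_cases i <;> simp [Matrix.vecMulVec]

theorem StrictAntiOn.existsUnique_eq_of_tendsto {f : ℝ → ℝ} {M L s : ℝ}
    (hf : StrictAntiOn f (Ici M)) (hc : ContinuousOn f (Ici M)) (hL : Tendsto f atTop (𝓝 L))
    (hLs : L < s) (hsM : s ≤ f M) : ∃! t, M ≤ t ∧ f t = s := by
  obtain ⟨B, hBs, hMB⟩ := ((hL.eventually (gt_mem_nhds hLs)).and (eventually_ge_atTop M)).exists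
  obtain ⟨t, ⟨hMt, -⟩, hts⟩ :=
    intermediate_value_Icc' hMB (hc.mono Icc_subset_Ici_self) ⟨hBs.le, hsM⟩
  exact ⟨t, ⟨hMt, hts⟩, fun t' ht' => hf.injOn ht'.1 hMt (ht'.2.trans hts.symm)⟩

namespace DiagonalModel

variable {ι : Type*} (p α : ι → ℝ)

def relEquilibria [Fintype ι] : Set (EuclideanSpace ℝ ι) :=
  {μ | (Matrix.of ![fun i => p i * μ i + α i, fun i => μ i]).rank ≤ 1}

noncomputable def branch (t : ℝ) : EuclideanSpace ℝ ι :=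
  WithLp.toLp 2 fun i => α i / (t - p i)

noncomputable def branchNormSq [Fintype ι] (t : ℝ) : ℝ :=
  ∑ i, (α i / (t - p i)) ^ 2

theorem norm_branch_sq [Fintype ι] (t : ℝ) : ‖branch p α t‖ ^ 2 = branchNormSq p α t :=
  EuclideanSpace.real_norm_sq_eq _

theorem branchNormSq_neg [Fintype ι] (t : ℝ) : branchNormSq p α (-t) = branchNormSq (-p) α t := by
  simp only [branchNormSq, Pi.neg_apply, div_pow]
  congr! 2 with i
  ring

variable {p α}

theorem branch_injective {i : ι} (hi : α i ≠ 0) : Function.Injective (branch p α) := by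
  intro t s h
  have := congrArg (fun μ : EuclideanSpace ℝ ι => μ i) h
  simpa [branch, div_eq_mul_inv, hi] using this

theorem mem_relEquilibria_iff [Fintype ι] (hα : ∀ i, α i ≠ 0) {μ : EuclideanSpace ℝ ι}
    (hμ : μ ≠ 0) : μ ∈ relEquilibria p α ↔ ∃ t, (∀ i, t ≠ p i) ∧ branch p α t = μ := by
  rw [relEquilibria, mem_ofPred_eq,
    Matrix.rank_of_two_rows_le_one_iff (by simpa [funext_iff, PiLp.ext_iff] using hμ)]
  simp only [funext_iff, PiLp.ext_iff, branch, Pi.smul_apply, smul_eq_mul,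
    mul_add_eq_mul_iff_div_sub_eq (hα _), forall_and]

theorem relEquilibria_inter_sphere [Fintype ι] (hα : ∀ i, α i ≠ 0) {r : ℝ} (hr : 0 < r) :
    relEquilibria p α ∩ Metric.sphere 0 r =
      branch p α '' {t | (∀ i, t ≠ p i) ∧ branchNormSq p α t = r ^ 2} := by
  ext μ
  simp only [mem_inter_iff, mem_sphere_zero_iff_norm, mem_image, mem_ofPred_eq]
  constructor
  · rintro ⟨hμ, hμr⟩
    obtain ⟨t, htp, rfl⟩ := (mem_relEquilibria_iff hα (by rintro rfl; simp [hr.ne] at hμr)).mp hμ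
    exact ⟨t, ⟨htp, by rw [← norm_branch_sq, hμr]⟩, rfl⟩
  · rintro ⟨t, ⟨htp, htr⟩, rfl⟩
    have hnorm : ‖branch p α t‖ = r := by
      rwa [← sq_eq_sq₀ (norm_nonneg _) hr.le, norm_branch_sq]
    refine ⟨(mem_relEquilibria_iff hα ?_).mpr ⟨t, htp, rfl⟩, hnorm⟩
    rw [← norm_ne_zero_iff, hnorm]
    exact hr.ne'

variable [Fintype ι]

theorem branchNormSq_pos [Nonempty ι] (hα : ∀ i, α i ≠ 0) {t : ℝ} (ht : ∀ i, t ≠ p i) :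
    0 < branchNormSq p α t :=
  Finset.sum_pos (fun i _ => sq_pos_of_ne_zero (div_ne_zero (hα i) (sub_ne_zero.mpr (ht i))))
    Finset.univ_nonempty

theorem tendsto_branchNormSq_atTop : Tendsto (branchNormSq p α) atTop (𝓝 0) := by
  have h : ∀ i, Tendsto (fun t => (α i / (t - p i)) ^ 2) atTop (𝓝 0) := fun i => by
    simpa [sub_eq_add_neg] using
      (tendsto_const_nhds.div_atTop (tendsto_atTop_add_const_right _ (-p i) tendsto_id)).pow 2
  rw [← Finset.sum_const_zero (s := (Finset.univ : Finset ι))]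
  exact tendsto_finsetSum _ fun i _ => h i

theorem continuousOn_branchNormSq {M : ℝ} (hp : ∀ i, p i < M) :
    ContinuousOn (branchNormSq p α) (Ici M) :=
  continuousOn_finsetSum _ fun i _ =>
    (continuousOn_const.div (continuousOn_id.sub continuousOn_const)
      fun _ ht => (sub_pos.mpr ((hp i).trans_le ht)).ne').pow 2

theorem strictAntiOn_branchNormSq [Nonempty ι] {M : ℝ} (hp : ∀ i, p i < M) (hα : ∀ i, α i ≠ 0) :
    StrictAntiOn (branchNormSq p α) (Ici M) := by
  intro x hx y hy hxy
  refine Finset.sum_lt_sum_of_nonempty Finset.univ_nonempty fun i _ => ?_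
  have hx' : 0 < x - p i := sub_pos.mpr ((hp i).trans_le hx)
  rw [div_pow, div_pow]
  exact div_lt_div_of_pos_left (sq_pos_of_ne_zero (hα i)) (by positivity)
    (pow_lt_pow_left₀ (by linarith) hx'.le two_ne_zero)

theorem div_two_mul_sq_le_branchNormSq {M t : ℝ} (hp : ∀ i, |p i| < M) (ht : |t| < M) {i : ι}
    (hti : t ≠ p i) : α i ^ 2 / (2 * M) ^ 2 ≤ branchNormSq p α t := by
  have hpi := abs_lt.mp (hp i)
  have ht' := abs_lt.mp ht
  calc α i ^ 2 / (2 * M) ^ 2 ≤ (α i / (t - p i)) ^ 2 := by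
        rw [div_pow]
        exact div_le_div_of_nonneg_left (sq_nonneg _) (sq_pos_of_ne_zero (sub_ne_zero.mpr hti))
          (sq_le_sq' (by linarith) (by linarith))
    _ ≤ branchNormSq p α t :=
        Finset.single_le_sum (f := fun i => (α i / (t - p i)) ^ 2) (fun _ _ => sq_nonneg _)
          (Finset.mem_univ i)

theorem exists_encard_setOf_branchNormSq_eq_two [Nonempty ι] (hα : ∀ i, α i ≠ 0) :
    ∃ δ > 0, ∀ s, 0 < s → s < δ → {t | (∀ i, t ≠ p i) ∧ branchNormSq p α t = s}.encard = 2 := by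
  obtain ⟨M, hM⟩ : ∃ M, ∀ i, |p i| < M := ⟨∑ i, |p i| + 1, fun i => by
    linarith [Finset.single_le_sum (fun j _ => abs_nonneg (p j)) (Finset.mem_univ i)]⟩
  have hpM : ∀ i, p i < M := fun i => (le_abs_self _).trans_lt (hM i)
  have hnegpM : ∀ i, (-p) i < M := fun i => (neg_le_abs _).trans_lt (hM i)
  let i₀ := Classical.arbitrary ι
  have hM0 : 0 < M := (abs_nonneg _).trans_lt (hM i₀)
  have hR := branchNormSq_pos hα fun i => (hpM i).ne'
  have hL := branchNormSq_pos (p := -p) hα fun i => (hnegpM i).ne'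
  have hmid : 0 < α i₀ ^ 2 / (2 * M) ^ 2 := by have := hα i₀; positivity
  refine ⟨min (branchNormSq p α M) (min (branchNormSq (-p) α M) (α i₀ ^ 2 / (2 * M) ^ 2)),
    lt_min hR (lt_min hL hmid), fun s hs hsδ => ?_⟩
  simp only [lt_min_iff] at hsδ
  obtain ⟨tR, ⟨htRM, htR⟩, huniqR⟩ :=
    (strictAntiOn_branchNormSq hpM hα).existsUnique_eq_of_tendsto
      (continuousOn_branchNormSq hpM) tendsto_branchNormSq_atTop hs hsδ.1.le
  obtain ⟨tL, ⟨htLM, htL⟩, huniqL⟩ :=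
    (strictAntiOn_branchNormSq hnegpM hα).existsUnique_eq_of_tendsto
      (continuousOn_branchNormSq hnegpM) tendsto_branchNormSq_atTop hs hsδ.2.1.le
  -- the left ray for `p` is the right ray for `-p`, via `branchNormSq_neg`
  suffices {t | (∀ i, t ≠ p i) ∧ branchNormSq p α t = s} = {tR, -tL} by
    rw [this, encard_pair (by linarith)]
  ext t
  simp only [mem_ofPred_eq, mem_insert_iff, mem_singleton_iff]
  constructor
  · rintro ⟨htp, hts⟩
    rcases le_or_gt M t with hMt | htM
    · exact Or.inl (huniqR t ⟨hMt, hts⟩)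
    rcases le_or_gt t (-M) with htM' | hMt'
    · refine Or.inr (neg_eq_iff_eq_neg.mp (huniqL (-t) ⟨by linarith, ?_⟩))
      rw [← branchNormSq_neg, neg_neg, hts]
    have := div_two_mul_sq_le_branchNormSq (α := α) hM (abs_lt.mpr ⟨hMt', htM⟩) (htp i₀)
    linarith [hsδ.2.2]
  · rintro (rfl | rfl)
    · exact ⟨fun i => ((hpM i).trans_le htRM).ne', htR⟩
    · refine ⟨fun i h => ?_, by rw [branchNormSq_neg, htL]⟩
      linarith [hnegpM i, show (-p) i = tL by simp [← h]]

theorem exists_encard_relEquilibria_inter_sphere_eq_two [Nonempty ι] (hα : ∀ i, α i ≠ 0) :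
    ∃ ε > 0, ∀ r, 0 < r → r < ε → (relEquilibria p α ∩ Metric.sphere 0 r).encard = 2 := by
  obtain ⟨δ, hδ, hcount⟩ := exists_encard_setOf_branchNormSq_eq_two (p := p) hα
  refine ⟨√δ, Real.sqrt_pos.mpr hδ, fun r hr hrδ => ?_⟩
  rw [relEquilibria_inter_sphere hα hr,
    (branch_injective (hα (Classical.arbitrary ι))).encard_image]
  exact hcount _ (by positivity) ((Real.lt_sqrt hr.le).mp hrδ)

end DiagonalModel

theorem stmt_17_general (a b c α β γ : ℝ)
    (hα : α ≠ 0) (hβ : β ≠ 0) (hγ : γ ≠ 0) :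
    ∃ ε > 0, ∀ r : ℝ, 0 < r → r < ε →
      ({μ : EuclideanSpace ℝ (Fin 3) |
          (!![2*a*(μ 0) + α, 2*b*(μ 1) + β, 2*c*(μ 2) + γ; μ 0, μ 1, μ 2] :
            Matrix (Fin 2) (Fin 3) ℝ).rank ≤ 1 ∧ ‖μ‖ = r}.encard = 2) := by
  obtain ⟨ε, hε, h⟩ := DiagonalModel.exists_encard_relEquilibria_inter_sphere_eq_two
    (p := ![2 * a, 2 * b, 2 * c]) (α := ![α, β, γ]) (by simp [Fin.forall_fin_succ, hα, hβ, hγ])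
  refine ⟨ε, hε, fun r hr hrε => ?_⟩
  convert h r hr hrε using 2
  ext μ
  simp only [DiagonalModel.relEquilibria, Set.mem_inter_iff, mem_sphere_zero_iff_norm]
  refine and_congr_left' (iff_of_eq (congrArg (fun A : Matrix (Fin 2) (Fin 3) ℝ => A.rank ≤ 1) ?_))
  ext i j
  fin_cases i <;> fin_cases j <;> rfl

/-- For pairwise distinct `a b c` and `α β γ` all nonzero, every
sphere of sufficiently small radius `r > 0` contains exactly two points of the
set of relative equilibria `R_{α,β,γ}`. -/
theorem stmt_17 (a b c α β γ : ℝ) (hab : a ≠ b) (hbc : b ≠ c) (hac : a ≠ c)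
    (hα : α ≠ 0) (hβ : β ≠ 0) (hγ : γ ≠ 0) :
    ∃ ε > 0, ∀ r : ℝ, 0 < r → r < ε →
      ({μ : EuclideanSpace ℝ (Fin 3) |
          (!![2*a*(μ 0) + α, 2*b*(μ 1) + β, 2*c*(μ 2) + γ; μ 0, μ 1, μ 2] :
            Matrix (Fin 2) (Fin 3) ℝ).rank ≤ 1 ∧ ‖μ‖ = r}.encard = 2) :=
  stmt_17_general a b c α β γ hα hβ hγ
end
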